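/- arXiv:2305.19008 — 2 statements merged into one kernel-verified Lean document; each statement's English description precedes it below -/
import Mathlib

section
/- For any real matrix A of rank r with singular values s_1 ≥ ... ≥ s_r > 0, the function L ↦ L · Σ_{i=1}^r s_i^(2/L) admits the asymptotic expansion L·r + 2·Σ_i log s_i + (2/L)·Σ_i (log s_i)^2 + O(L^{-2}) as L → ∞. -/
open Matrix Finset

/-- The singular values of a real matrix, listed in decreasing order (square roots of the
eigenvalues of `Aᵀ A`, sorted). -/
noncomputable def singularValues {m n : ℕ} (A : Matrix (Fin m) (Fin n) ℝ) : Fin n → ℝ :=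
  fun i => Real.sqrt (((show (Aᵀ * A).IsHermitian by
    simpa using Matrix.isHermitian_conjTranspose_mul_self A).eigenvalues ∘
    Tuple.sort ((show (Aᵀ * A).IsHermitian by
    simpa using Matrix.isHermitian_conjTranspose_mul_self A).eigenvalues)) i.rev)

/-- The `i`-th largest singular value (0-indexed), zero-padded beyond the matrix dimensions. -/
noncomputable def sval {m n : ℕ} (A : Matrix (Fin m) (Fin n) ℝ) (i : ℕ) : ℝ :=
  if h : i < n then singularValues A ⟨i, h⟩ else 0

/-! Writing `s ^ (2 / L) = exp x` with `x = 2 log s / L`, the second-order Taylor bound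
`|exp x - (1 + x + x²/2)| ≤ |x|³` (valid for `|x| ≤ 1`, i.e. for `L ≥ 2 |log s|`) gives, after
multiplying by `L`, an error of at most `8 |log s|³ / L²` for each singular value. Summing over
the `r` singular values yields the expansion with `C = ∑ᵢ 8 |log sᵢ|³`. -/

namespace Real

theorem abs_exp_sub_quadratic_le {x : ℝ} (hx : |x| ≤ 1) :
    |exp x - (1 + x + x ^ 2 / 2)| ≤ |x| ^ 3 := by
  have h := exp_bound hx (n := 3) (by norm_num)
  norm_num [Finset.sum_range_succ, Nat.factorial] at h
  calc |exp x - (1 + x + x ^ 2 / 2)| ≤ |x| ^ 3 * (2 / 9) := by convert h using 3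
    _ ≤ |x| ^ 3 := by nlinarith [pow_nonneg (abs_nonneg x) 3]

theorem abs_mul_rpow_two_div_sub_le {a L : ℝ} (ha : 0 < a) (hL : 0 < L)
    (haL : 2 * |log a| ≤ L) :
    |L * a ^ (2 / L) - (L + 2 * log a + 2 / L * log a ^ 2)| ≤ 8 * |log a| ^ 3 / L ^ 2 := by
  set x := 2 * log a / L with hx
  have hx1 : |x| ≤ 1 := by
    rwa [hx, abs_div, abs_of_pos hL, div_le_one hL, abs_mul, abs_two]
  have hrpow : a ^ (2 / L) = exp x := by
    rw [rpow_def_of_pos ha, hx]; ring_nf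
  have hsub : L * a ^ (2 / L) - (L + 2 * log a + 2 / L * log a ^ 2)
      = L * (exp x - (1 + x + x ^ 2 / 2)) := by
    rw [hrpow, hx]; field_simp
  have hxcube : |x| ^ 3 = 8 * |log a| ^ 3 / L ^ 3 := by
    rw [hx, abs_div, abs_of_pos hL, abs_mul, abs_two, div_pow]; ring
  calc |L * a ^ (2 / L) - (L + 2 * log a + 2 / L * log a ^ 2)|
      = L * |exp x - (1 + x + x ^ 2 / 2)| := by rw [hsub, abs_mul, abs_of_pos hL]
    _ ≤ L * |x| ^ 3 := by gcongr; exact abs_exp_sub_quadratic_le hx1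
    _ = 8 * |log a| ^ 3 / L ^ 2 := by rw [hxcube]; field_simp

end Real

theorem stmt1_general {r : ℕ} (s : Fin r → ℝ) (hpos : ∀ i, 0 < s i) :
    ∃ C : ℝ, ∀ᶠ L : ℕ in Filter.atTop,
      |(L : ℝ) * ∑ i, s i ^ ((2 : ℝ) / L) -
        ((L : ℝ) * r + 2 * ∑ i, Real.log (s i)
          + (2 / L) * ∑ i, (Real.log (s i)) ^ 2)| ≤ C / (L : ℝ) ^ 2 := by
  refine ⟨∑ i, 8 * |Real.log (s i)| ^ 3, ?_⟩
  have hlarge : ∀ᶠ L : ℕ in Filter.atTop, ∀ i, 2 * |Real.log (s i)| ≤ L :=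
    Filter.eventually_all.2 fun i => tendsto_natCast_atTop_atTop.eventually_ge_atTop _
  filter_upwards [hlarge, Filter.eventually_gt_atTop 0] with L hL hL0
  have hLpos : (0 : ℝ) < L := by exact_mod_cast hL0
  calc _ = |∑ i, ((L : ℝ) * s i ^ ((2 : ℝ) / L)
          - (L + 2 * Real.log (s i) + 2 / L * Real.log (s i) ^ 2))| := by
        simp only [sum_sub_distrib, sum_add_distrib, ← mul_sum, sum_const, card_univ,
          Fintype.card_fin, nsmul_eq_mul]
        congr 1
        ring
    _ ≤ ∑ i, |(L : ℝ) * s i ^ ((2 : ℝ) / L)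
          - (L + 2 * Real.log (s i) + 2 / L * Real.log (s i) ^ 2)| := abs_sum_le_sum_abs _ _
    _ ≤ ∑ i, 8 * |Real.log (s i)| ^ 3 / (L : ℝ) ^ 2 :=
        sum_le_sum fun i _ => Real.abs_mul_rpow_two_div_sub_le (hpos i) hLpos (hL i)
    _ = _ := (sum_div _ _ _).symm

/-- For a matrix `A` of rank `r` with nonzero singular values `s₁ ≥ … ≥ s_r > 0`, the map
`L ↦ L·∑ᵢ sᵢ^{2/L}` expands as `L·r + 2∑ᵢ log sᵢ + (2/L)∑ᵢ (log sᵢ)² + O(L⁻²)` as `L → ∞`. -/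
theorem stmt1 {m n r : ℕ} (A : Matrix (Fin m) (Fin n) ℝ) (hr : r ≤ n) (hrank : A.rank = r)
    (s : Fin r → ℝ) (hs : ∀ i, s i = singularValues A (Fin.castLE hr i))
    (hpos : ∀ i, 0 < s i) :
    ∃ C : ℝ, ∀ᶠ L : ℕ in Filter.atTop,
      |(L : ℝ) * ∑ i, s i ^ ((2 : ℝ) / L) -
        ((L : ℝ) * r + 2 * ∑ i, Real.log (s i)
          + (2 / L) * ∑ i, (Real.log (s i)) ^ 2)| ≤ C / (L : ℝ) ^ 2 :=
  stmt1_general s hpos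
end

section
/- For any real matrix W and integer k ≤ min of its dimensions, with SVD W = U S V^T, let U_k, V_k denote the submatrices of the first k left/right singular vectors. Then ‖W − U_k V_k^T‖_F^2 ≤ ‖W‖_F^2 − k − 2 log|W|_k, where |W|_k is the product of the k largest singular values of W (assumed positive). -/
/-
Conjugation by the orthogonal factors preserves the sum of squares of the entries, so both sides
are sums over the singular values `sᵢ`, `i < min m n`: the left side is
`∑_{i<k} (sᵢ - 1)² + ∑_{i≥k} sᵢ²`. For `i < k` the term `(sᵢ - 1)²` is at most
`sᵢ² - 1 - 2 log sᵢ`, which is `log sᵢ ≤ sᵢ - 1`; the remaining terms agree with those of `‖W‖_F²`.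
-/

open Matrix Finset

noncomputable def kDet {m n : ℕ} (A : Matrix (Fin m) (Fin n) ℝ) (k : ℕ) : ℝ :=
  ∏ i ∈ Finset.range k, sval A i

section Orthogonal

variable {ι κ : Type*} [Fintype ι] [Fintype κ]

theorem sum_sq_eq_trace_transpose_mul (A : Matrix ι κ ℝ) :
    ∑ i, ∑ j, A i j ^ 2 = (Aᵀ * A).trace := by
  simp only [trace, Matrix.diag, mul_apply, transpose_apply, sq]
  exact sum_comm

theorem sum_sq_mul_mul_transpose_of_orthogonal [DecidableEq ι] [DecidableEq κ]
    {U : Matrix ι ι ℝ} {V : Matrix κ κ ℝ} (hU : Uᵀ * U = 1) (hV : Vᵀ * V = 1)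
    (A : Matrix ι κ ℝ) :
    ∑ i, ∑ j, (U * A * Vᵀ) i j ^ 2 = ∑ i, ∑ j, A i j ^ 2 := by
  rw [sum_sq_eq_trace_transpose_mul, sum_sq_eq_trace_transpose_mul]
  calc ((U * A * Vᵀ)ᵀ * (U * A * Vᵀ)).trace = (V * (Aᵀ * (Uᵀ * U) * A * Vᵀ)).trace := by
        simp only [transpose_mul, transpose_transpose, Matrix.mul_assoc]
    _ = (Aᵀ * A * (Vᵀ * V)).trace := by
        rw [trace_mul_comm, hU, Matrix.mul_one, Matrix.mul_assoc]
    _ = (Aᵀ * A).trace := by rw [hV, Matrix.mul_one]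

end Orthogonal

section RectDiag

variable {m n : ℕ}

def rectDiag (m n : ℕ) (f : ℕ → ℝ) : Matrix (Fin m) (Fin n) ℝ :=
  of fun i j => if (i : ℕ) = j then f i else 0

theorem rectDiag_sub (f g : ℕ → ℝ) : rectDiag m n f - rectDiag m n g = rectDiag m n (f - g) := by
  ext i j
  by_cases h : (i : ℕ) = j <;> simp [rectDiag, h]

theorem sum_sq_rectDiag (f : ℕ → ℝ) :
    ∑ i, ∑ j, rectDiag m n f i j ^ 2 = ∑ i ∈ range (min m n), f i ^ 2 := by
  have row (i : ℕ) : ∑ j : Fin n, (if i = j then f i else 0) ^ 2 =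
      if i ∈ range n then f i ^ 2 else 0 := by
    simp only [ite_pow, ne_eq, OfNat.ofNat_ne_zero, not_false_eq_true, zero_pow]
    rw [Fin.sum_univ_eq_sum_range (fun j => if i = j then f i ^ 2 else 0), sum_ite_eq]
  simp only [rectDiag, of_apply, row]
  rw [Fin.sum_univ_eq_sum_range (fun i => if i ∈ range n then f i ^ 2 else 0), ← sum_filter,
    filter_mem_eq_inter, range_inter_range]

end RectDiag

theorem sq_sub_one_le_sq_sub_one_sub_two_mul_log {s : ℝ} (hs : 0 < s) :
    (s - 1) ^ 2 ≤ s ^ 2 - 1 - 2 * Real.log s := by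
  nlinarith [Real.log_le_sub_one_of_pos hs]

theorem sum_range_sq_sub_indicator_le {s : ℕ → ℝ} {k r : ℕ} (hkr : k ≤ r)
    (hpos : ∀ i < k, 0 < s i) :
    ∑ i ∈ range r, (s i - if i < k then 1 else 0) ^ 2 ≤
      ∑ i ∈ range r, s i ^ 2 - k - 2 * ∑ i ∈ range k, Real.log (s i) := by
  rw [← sum_range_add_sum_Ico _ hkr, ← sum_range_add_sum_Ico _ hkr]
  have head : ∑ i ∈ range k, (s i - if i < k then 1 else 0) ^ 2 ≤
      ∑ i ∈ range k, (s i ^ 2 - 1 - 2 * Real.log (s i)) :=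
    sum_le_sum fun i hi => by
      rw [if_pos (mem_range.1 hi)]
      exact sq_sub_one_le_sq_sub_one_sub_two_mul_log (hpos i (mem_range.1 hi))
  have tail : ∑ i ∈ Ico k r, (s i - if i < k then 1 else 0) ^ 2 = ∑ i ∈ Ico k r, s i ^ 2 :=
    sum_congr rfl fun i hi => by rw [if_neg (mem_Ico.1 hi).1.not_gt, sub_zero]
  simp only [sum_sub_distrib, sum_const, card_range, nsmul_eq_mul, mul_one, ← mul_sum] at head
  linarith

/-- Given an SVD `W = U S Vᵀ`, the truncation `U_k V_kᵀ` (first `k` singular directions)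
satisfies `‖W − U_k V_kᵀ‖_F² ≤ ‖W‖_F² − k − 2 log|W|_k`, provided the `k` largest singular
values of `W` are positive. -/
theorem stmt4 {m n k : ℕ} (hk : k ≤ min m n) (W : Matrix (Fin m) (Fin n) ℝ)
    (U : Matrix (Fin m) (Fin m) ℝ) (V : Matrix (Fin n) (Fin n) ℝ)
    (hU : Uᵀ * U = 1) (hV : Vᵀ * V = 1)
    (hSVD : W = U * (Matrix.of fun (i : Fin m) (j : Fin n) =>
      if (i : ℕ) = (j : ℕ) then sval W i else 0) * Vᵀ)
    (hpos : ∀ i < k, 0 < sval W i) :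
    ∑ i, ∑ j,
        ((W - U * (Matrix.of fun (i : Fin m) (j : Fin n) =>
          if (i : ℕ) = (j : ℕ) ∧ (i : ℕ) < k then (1 : ℝ) else 0) * Vᵀ) i j) ^ 2 ≤
      (∑ i, ∑ j, (W i j) ^ 2) - k - 2 * Real.log (kDet W k) := by
  have hW : W = U * rectDiag m n (sval W) * Vᵀ := hSVD
  have hres : W - U * (of fun (i : Fin m) (j : Fin n) =>
        if (i : ℕ) = j ∧ (i : ℕ) < k then (1 : ℝ) else 0) * Vᵀ =
      U * rectDiag m n (fun i => sval W i - if i < k then 1 else 0) * Vᵀ := by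
    have htrunc : (of fun (i : Fin m) (j : Fin n) =>
        if (i : ℕ) = j ∧ (i : ℕ) < k then (1 : ℝ) else 0) =
        rectDiag m n (fun i => if i < k then 1 else 0) := by
      ext i j
      by_cases h : (i : ℕ) = j <;> simp [rectDiag, h]
    conv_lhs => rw [hW]
    rw [htrunc, ← Matrix.sub_mul, ← Matrix.mul_sub, rectDiag_sub]
    rfl
  have hnorm : ∑ i, ∑ j, W i j ^ 2 = ∑ i ∈ range (min m n), sval W i ^ 2 := by
    have := sum_sq_mul_mul_transpose_of_orthogonal hU hV (rectDiag m n (sval W))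
    rwa [← hW, sum_sq_rectDiag] at this
  have hlog : Real.log (kDet W k) = ∑ i ∈ range k, Real.log (sval W i) :=
    Real.log_prod fun i hi => (hpos i (mem_range.1 hi)).ne'
  rw [hres, sum_sq_mul_mul_transpose_of_orthogonal hU hV, sum_sq_rectDiag, hnorm, hlog]
  exact sum_range_sq_sub_indicator_le hk hpos
end
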